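/- arXiv:1307.0028 — 2 statements merged into one kernel-verified Lean document; each statement's English description precedes it below -/
import Mathlib

section
/- Suppose 0 < β < β_c, and define ν(k) = −ω/(2f(k)) + (1/2)·( ω²/f(k)² + 4(1+βk²)/f(k) )^{1/2} for k ≥ 0. Then ν attains a global minimum over [0, ∞) at a unique point k₀, this point satisfies k₀ > 0, and ν(k₀) < ν(0). Moreover, writing ν₀′ = ν(k₀), the function g(k) := 1 + βk² − ων₀′ − ν₀′²·f(k) satisfies g(k) ≥ 0 for all k ∈ ℝ, with equality precisely when k = ±k₀. -/
/-- `f(k) = |k|·coth|k|`, extended by `f(0) = 1`. -/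
noncomputable def fdisp (k : ℝ) : ℝ :=
  if k = 0 then 1 else k * Real.cosh k / Real.sinh k

/-!
With `g_m(k) = dispersion ω β m k = 1 + β k² - ω m - m² f(k)` and `ν = dispersionRoot ω β`,
one has `g_m(k) = (ν k - m) (f(k) (ν k + m) + ω)` with a positive second factor, so the
sign of `g_m(k)` is the sign of `ν k - m`. Since `f(k) - 1 > k³ / (3 sinh k)` and `β < ν(0)² / 3`,
`g_{ν 0} < 0` for some small `k > 0`, so `ν` dips below `ν 0`; since `f(k) ≤ 1 + |k|`, `ν → ∞`.
Hence `ν` has a global minimum value `m < ν 0`, attained only at points `k ≠ 0`, and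
`g_m ≥ 0` vanishes exactly at the minimisers. Two positive minimisers would be critical points
of `g_m`, Rolle would give a third critical point between them, but `g_m'` is strictly convex
on `(0, ∞)` because `(k coth k)''' < 0` there, and a strictly convex function has no three zeros.
-/

open Real Set Filter

lemma pos_of_hasDerivAt_pos {q q' : ℝ → ℝ} (hq : ∀ x, HasDerivAt q (q' x) x) (hq0 : q 0 = 0)
    (hq' : ∀ x, 0 < x → 0 < q' x) {x : ℝ} (hx : 0 < x) : 0 < q x := by
  have hmono : StrictMonoOn q (Ici 0) :=
    strictMonoOn_of_hasDerivWithinAt_pos (convex_Ici 0)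
      (fun y _ => (hq y).continuousAt.continuousWithinAt)
      (fun y _ => (hq y).hasDerivWithinAt)
      (fun y hy => hq' y (by simpa using hy))
  simpa [hq0] using hmono self_mem_Ici hx.le hx

lemma eq_of_isLocalMin_of_strictConvexOn_deriv {G G' : ℝ → ℝ} {s : Set ℝ}
    (hs : Convex ℝ s) (hG : ∀ x ∈ s, HasDerivAt G (G' x) x) (hG' : StrictConvexOn ℝ s G')
    {a b : ℝ} (ha : a ∈ s) (hb : b ∈ s) (ha_min : IsLocalMin G a) (hb_min : IsLocalMin G b)
    (hab : G a = G b) : a = b := by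
  wlog hlt : a < b generalizing a b
  · rcases (not_lt.1 hlt).eq_or_lt with h | h
    · exact h.symm
    · exact (this hb ha hb_min ha_min hab.symm h).symm
  have hsub : Icc a b ⊆ s := hs.ordConnected.out ha hb
  obtain ⟨c, hc, hGc⟩ := exists_hasDerivAt_eq_zero hlt
    (fun x hx => (hG x (hsub hx)).continuousAt.continuousWithinAt) hab
    (fun x hx => hG x (hsub (Ioo_subset_Icc_self hx)))
  have hGa : G' a = 0 := ha_min.hasDerivAt_eq_zero (hG a ha)
  have hGb : G' b = 0 := hb_min.hasDerivAt_eq_zero (hG b hb)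
  have := hG'.lt_on_openSegment ha hb hlt.ne (by rwa [openSegment_eq_Ioo hlt])
  rw [hGa, hGb, hGc, max_self] at this
  exact absurd this (lt_irrefl 0)

lemma sinh_lt_mul_cosh {x : ℝ} (hx : 0 < x) : sinh x < x * cosh x := by
  have := pos_of_hasDerivAt_pos (q := fun y => y * cosh y - sinh y) (q' := fun y => y * sinh y)
    (fun y => (((hasDerivAt_id y).fun_mul (hasDerivAt_cosh y)).fun_sub
      (hasDerivAt_sinh y)).congr_deriv (by simp))
    (by simp) (fun y hy => mul_pos hy (sinh_pos_iff.2 hy)) hx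
  linarith

lemma pow_three_div_three_lt_mul_cosh_sub_sinh {x : ℝ} (hx : 0 < x) :
    x ^ 3 / 3 < x * cosh x - sinh x := by
  have := pos_of_hasDerivAt_pos (q := fun y => y * cosh y - sinh y - y ^ 3 / 3)
    (q' := fun y => y * (sinh y - y))
    (fun y => ((((hasDerivAt_id y).fun_mul (hasDerivAt_cosh y)).fun_sub
      (hasDerivAt_sinh y)).fun_sub ((hasDerivAt_pow 3 y).div_const 3)).congr_deriv
      (by simp only [id_eq]; ring))
    (by simp) (fun y hy => mul_pos hy (by linarith [self_lt_sinh_iff.2 hy])) hx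
  linarith

lemma mul_sinh_sq_add_lt_mul_cosh_sq {x : ℝ} (hx : 0 < x) :
    x * sinh x ^ 2 + 3 * sinh x * cosh x < 3 * x * cosh x ^ 2 := by
  have := pos_of_hasDerivAt_pos
    (q := fun y => 3 * y * cosh y ^ 2 - y * sinh y ^ 2 - 3 * sinh y * cosh y)
    (q' := fun y => 4 * sinh y * (y * cosh y - sinh y))
    (fun y => (((((hasDerivAt_id y).const_mul 3).fun_mul ((hasDerivAt_cosh y).fun_pow 2)).fun_sub
        ((hasDerivAt_id y).fun_mul ((hasDerivAt_sinh y).fun_pow 2))).fun_sub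
        (((hasDerivAt_sinh y).const_mul 3).fun_mul (hasDerivAt_cosh y))).congr_deriv
      (by simp only [id_eq]; ring))
    (by simp)
    (fun y hy => mul_pos (by linarith [sinh_pos_iff.2 hy]) (by linarith [sinh_lt_mul_cosh hy])) hx
  linarith

lemma exists_sinh_lt_mul_self {c : ℝ} (hc : 1 < c) : ∃ k, 0 < k ∧ sinh k < c * k := by
  have hk := log_pos hc
  refine ⟨log c, hk, ?_⟩
  calc sinh (log c) < log c * cosh (log c) := sinh_lt_mul_cosh hk
    _ ≤ log c * exp (log c) := by
      gcongr
      rw [cosh_eq]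
      linarith [exp_le_exp.2 (show -log c ≤ log c by linarith)]
    _ = c * log c := by rw [exp_log (by linarith), mul_comm]

@[simp] lemma fdisp_zero : fdisp 0 = 1 := by simp [fdisp]

lemma fdisp_of_ne_zero {k : ℝ} (hk : k ≠ 0) : fdisp k = k * cosh k / sinh k := if_neg hk

@[simp] lemma fdisp_neg (k : ℝ) : fdisp (-k) = fdisp k := by
  rcases eq_or_ne k 0 with rfl | hk
  · simp
  · rw [fdisp_of_ne_zero hk, fdisp_of_ne_zero (neg_ne_zero.2 hk), cosh_neg, sinh_neg]
    ring

lemma fdisp_abs (k : ℝ) : fdisp |k| = fdisp k := by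
  rcases abs_choice k with h | h <;> simp [h]

lemma fdisp_pos (k : ℝ) : 0 < fdisp k := by
  rw [← fdisp_abs]
  rcases (abs_nonneg k).eq_or_lt with h | h
  · simp [← h]
  · rw [fdisp_of_ne_zero h.ne']
    have := sinh_pos_iff.2 h
    positivity

lemma fdisp_le_one_add_abs (k : ℝ) : fdisp k ≤ 1 + |k| := by
  rw [← fdisp_abs]
  rcases (abs_nonneg k).eq_or_lt with h | h
  · simp [← h]
  set x := |k|
  have hs := sinh_pos_iff.2 h
  rw [fdisp_of_ne_zero h.ne', div_le_iff₀ hs]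
  have h1 : x ≤ sinh x := self_le_sinh_iff.2 h.le
  have h2 : cosh x - sinh x ≤ 1 := by
    rw [cosh_sub_sinh, exp_le_one_iff]
    linarith
  nlinarith

lemma pow_three_div_lt_fdisp_sub_one {k : ℝ} (hk : 0 < k) :
    k ^ 3 / (3 * sinh k) < fdisp k - 1 := by
  have hs := sinh_pos_iff.2 hk
  rw [fdisp_of_ne_zero hk.ne', div_sub_one hs.ne', div_lt_div_iff₀ (by positivity) hs]
  nlinarith [pow_three_div_three_lt_mul_cosh_sub_sinh hk]

@[fun_prop]
lemma continuous_fdisp : Continuous fdisp := by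
  have hslope : Continuous (dslope sinh 0) := continuous_iff_continuousAt.2 fun k => by
    rcases eq_or_ne k 0 with rfl | hk
    · exact continuousAt_dslope_same.2 (differentiable_sinh 0)
    · exact (continuousAt_dslope_of_ne hk).2 continuous_sinh.continuousAt
  have hslope_ne (k : ℝ) : dslope sinh 0 k ≠ 0 := by
    rcases eq_or_ne k 0 with rfl | hk
    · simp [dslope_same]
    · simp [dslope_of_ne _ hk, slope_def_field, hk]
  have hfdisp : fdisp = fun k => cosh k / dslope sinh 0 k := funext fun k => by
    rcases eq_or_ne k 0 with rfl | hk
    · simp [dslope_same]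
    · rw [fdisp_of_ne_zero hk, dslope_of_ne _ hk, slope_def_field, sinh_zero, sub_zero, sub_zero]
      field_simp [sinh_ne_zero.2 hk]
  rw [hfdisp]
  exact continuous_cosh.div hslope hslope_ne

noncomputable def fdispDeriv (x : ℝ) : ℝ := (sinh x * cosh x - x) / sinh x ^ 2

noncomputable def fdispDeriv2 (x : ℝ) : ℝ := 2 * (x * cosh x - sinh x) / sinh x ^ 3

lemma hasDerivAt_fdisp {x : ℝ} (hx : x ≠ 0) : HasDerivAt fdisp (fdispDeriv x) x := by
  have hs : sinh x ≠ 0 := sinh_ne_zero.2 hx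
  have hformula : HasDerivAt (fun k => k * cosh k / sinh k) (fdispDeriv x) x :=
    (((hasDerivAt_id x).fun_mul (hasDerivAt_cosh x)).fun_div (hasDerivAt_sinh x) hs).congr_deriv
      (by simp only [fdispDeriv, id_eq]; field_simp; linear_combination (-x) * cosh_sq x)
  refine hformula.congr_of_eventuallyEq ?_
  filter_upwards [isOpen_ne.mem_nhds hx] with k hk using fdisp_of_ne_zero hk

lemma hasDerivAt_fdispDeriv {x : ℝ} (hx : x ≠ 0) : HasDerivAt fdispDeriv (fdispDeriv2 x) x := by
  have hs : sinh x ≠ 0 := sinh_ne_zero.2 hx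
  exact ((((hasDerivAt_sinh x).fun_mul (hasDerivAt_cosh x)).fun_sub (hasDerivAt_id x)).fun_div
    ((hasDerivAt_sinh x).fun_pow 2) (pow_ne_zero 2 hs)).congr_deriv
      (by simp only [fdispDeriv2, id_eq]; field_simp; linear_combination (-sinh x ^ 2) * cosh_sq x)

lemma strictAntiOn_fdispDeriv2 : StrictAntiOn fdispDeriv2 (Ioi 0) := by
  have hderiv {x : ℝ} (hx : 0 < x) : HasDerivAt fdispDeriv2
      (2 * (x * sinh x ^ 2 + 3 * sinh x * cosh x - 3 * x * cosh x ^ 2) / sinh x ^ 4) x := by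
    have hs : sinh x ≠ 0 := (sinh_pos_iff.2 hx).ne'
    exact ((((hasDerivAt_id x).fun_mul (hasDerivAt_cosh x)).fun_sub
      (hasDerivAt_sinh x)).const_mul 2 |>.fun_div ((hasDerivAt_sinh x).fun_pow 3)
      (pow_ne_zero 3 hs)).congr_deriv (by simp only [id_eq]; field_simp; ring)
  refine strictAntiOn_of_hasDerivWithinAt_neg (convex_Ioi 0)
    (fun x hx => (hderiv hx).continuousAt.continuousWithinAt)
    (fun x hx => (hderiv (by simpa using hx)).hasDerivWithinAt) fun x hx => ?_
  rw [interior_Ioi] at hx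
  have hs := sinh_pos_iff.2 hx
  have := mul_sinh_sq_add_lt_mul_cosh_sq hx
  exact div_neg_of_neg_of_pos (by linarith) (by positivity)

noncomputable def dispersion (ω β m k : ℝ) : ℝ := 1 + β * k ^ 2 - ω * m - m ^ 2 * fdisp k

noncomputable def dispersionRoot (ω β k : ℝ) : ℝ :=
  -ω / (2 * fdisp k) + (1 / 2) * √(ω ^ 2 / fdisp k ^ 2 + 4 * (1 + β * k ^ 2) / fdisp k)

section Dispersion

variable {ω β : ℝ}

lemma dispersion_abs (m k : ℝ) : dispersion ω β m |k| = dispersion ω β m k := by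
  simp [dispersion, fdisp_abs]

lemma dispersionRoot_abs (k : ℝ) : dispersionRoot ω β |k| = dispersionRoot ω β k := by
  simp [dispersionRoot, fdisp_abs]

lemma continuous_dispersionRoot : Continuous (dispersionRoot ω β) := by
  unfold dispersionRoot
  fun_prop (disch := exact fun k => by have := fdisp_pos k; positivity)

lemma two_mul_fdisp_mul_dispersionRoot_add (k : ℝ) :
    2 * fdisp k * dispersionRoot ω β k + ω = √(ω ^ 2 + 4 * (1 + β * k ^ 2) * fdisp k) := by
  have hf := fdisp_pos k
  have : ω ^ 2 / fdisp k ^ 2 + 4 * (1 + β * k ^ 2) / fdisp k =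
      (ω ^ 2 + 4 * (1 + β * k ^ 2) * fdisp k) / fdisp k ^ 2 := by
    field_simp
  rw [dispersionRoot, this, sqrt_div' _ (by positivity), sqrt_sq hf.le]
  field_simp
  ring

lemma dispersionRoot_zero_sq :
    dispersionRoot ω β 0 ^ 2 = (ω ^ 2 + 2 - ω * √(ω ^ 2 + 4)) / 2 := by
  have h := two_mul_fdisp_mul_dispersionRoot_add (ω := ω) (β := β) 0
  norm_num at h
  linear_combination (2 * dispersionRoot ω β 0 - ω + √(ω ^ 2 + 4)) / 4 * h +
    (1 / 4) * sq_sqrt (show 0 ≤ ω ^ 2 + 4 by positivity)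

lemma abs_lt_sqrt_discriminant (hβ : 0 ≤ β) (k : ℝ) :
    |ω| < √(ω ^ 2 + 4 * (1 + β * k ^ 2) * fdisp k) := by
  rw [← sqrt_sq_eq_abs]
  have := fdisp_pos k
  exact sqrt_lt_sqrt (sq_nonneg ω) (by nlinarith [sq_nonneg k, mul_nonneg hβ (sq_nonneg k)])

lemma dispersionRoot_pos (hβ : 0 ≤ β) (k : ℝ) : 0 < dispersionRoot ω β k := by
  have := two_mul_fdisp_mul_dispersionRoot_add (ω := ω) (β := β) k
  have := abs_lt_sqrt_discriminant (ω := ω) hβ k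
  have h2f : 0 < 2 * fdisp k := by linarith [fdisp_pos k]
  exact pos_of_mul_pos_right (by linarith [le_abs_self ω]) h2f.le

lemma dispersion_dispersionRoot (hβ : 0 ≤ β) (k : ℝ) :
    dispersion ω β (dispersionRoot ω β k) k = 0 := by
  have h := two_mul_fdisp_mul_dispersionRoot_add (ω := ω) (β := β) k
  have hD : 0 ≤ ω ^ 2 + 4 * (1 + β * k ^ 2) * fdisp k := by
    have := fdisp_pos k
    positivity
  have : fdisp k * dispersion ω β (dispersionRoot ω β k) k = 0 := by
    unfold dispersion
    linear_combination (-1 / 4 : ℝ) * (congrArg (· ^ 2) h).trans (sq_sqrt hD)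
  exact (mul_eq_zero.1 this).resolve_left (fdisp_pos k).ne'

lemma fdisp_mul_dispersionRoot_add_add_pos (hβ : 0 ≤ β) {m : ℝ} (hm : 0 ≤ m) (k : ℝ) :
    0 < fdisp k * (dispersionRoot ω β k + m) + ω := by
  have := two_mul_fdisp_mul_dispersionRoot_add (ω := ω) (β := β) k
  have := abs_lt_sqrt_discriminant (ω := ω) hβ k
  have := mul_nonneg (fdisp_pos k).le hm
  linarith [neg_abs_le ω]

lemma dispersion_eq_mul (hβ : 0 ≤ β) (m k : ℝ) : dispersion ω β m k =
    (dispersionRoot ω β k - m) * (fdisp k * (dispersionRoot ω β k + m) + ω) := by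
  have := dispersion_dispersionRoot (ω := ω) hβ k
  unfold dispersion at *
  linear_combination this

lemma dispersion_nonneg_iff (hβ : 0 ≤ β) {m : ℝ} (hm : 0 ≤ m) (k : ℝ) :
    0 ≤ dispersion ω β m k ↔ m ≤ dispersionRoot ω β k := by
  rw [dispersion_eq_mul hβ, mul_nonneg_iff_of_pos_right
    (fdisp_mul_dispersionRoot_add_add_pos hβ hm k), sub_nonneg]

lemma dispersion_neg_iff (hβ : 0 ≤ β) {m : ℝ} (hm : 0 ≤ m) (k : ℝ) :
    dispersion ω β m k < 0 ↔ dispersionRoot ω β k < m := by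
  rw [← not_le, dispersion_nonneg_iff hβ hm, not_le]

lemma dispersion_eq_zero_iff (hβ : 0 ≤ β) {m : ℝ} (hm : 0 ≤ m) (k : ℝ) :
    dispersion ω β m k = 0 ↔ dispersionRoot ω β k = m := by
  rw [dispersion_eq_mul hβ, mul_eq_zero, sub_eq_zero,
    or_iff_left (fdisp_mul_dispersionRoot_add_add_pos hβ hm k).ne']

end Dispersion

lemma exists_dispersionRoot_lt_dispersionRoot_zero {ω β : ℝ} (hβ : 0 < β)
    (h : 3 * β < dispersionRoot ω β 0 ^ 2) :
    ∃ k, 0 < k ∧ dispersionRoot ω β k < dispersionRoot ω β 0 := by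
  set m := dispersionRoot ω β 0
  have hm : 0 < m := dispersionRoot_pos hβ.le 0
  have hm_root : m ^ 2 + ω * m = 1 := by
    have := dispersion_dispersionRoot (ω := ω) hβ.le 0
    simp only [dispersion, fdisp_zero] at this
    linear_combination -this
  obtain ⟨k, hk, hsinh⟩ := exists_sinh_lt_mul_self ((one_lt_div (by positivity)).2 h)
  refine ⟨k, hk, (dispersion_neg_iff hβ.le hm.le k).1 ?_⟩
  have hs := sinh_pos_iff.2 hk
  have hβk : β * k ^ 2 < m ^ 2 * (k ^ 3 / (3 * sinh k)) := by
    rw [div_mul_eq_mul_div, lt_div_iff₀ (by positivity)] at hsinh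
    rw [mul_div_assoc', lt_div_iff₀ (by positivity)]
    nlinarith [pow_pos hk 2]
  calc dispersion ω β m k = β * k ^ 2 - m ^ 2 * (fdisp k - 1) := by
        unfold dispersion
        linear_combination -hm_root
    _ < β * k ^ 2 - m ^ 2 * (k ^ 3 / (3 * sinh k)) := by
        gcongr
        exact pow_three_div_lt_fdisp_sub_one hk
    _ < 0 := by linarith

lemma tendsto_dispersionRoot_cocompact {ω β : ℝ} (hβ : 0 < β) :
    Tendsto (dispersionRoot ω β) (cocompact ℝ) atTop := by
  refine tendsto_atTop.2 fun m₀ => ?_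
  set m := max m₀ 0
  set C := 1 - ω * m - m ^ 2
  filter_upwards [tendsto_norm_cocompact_atTop.eventually_ge_atTop ((m ^ 2 + |C|) / β + 1)]
    with k hk
  rw [norm_eq_abs] at hk
  refine (le_max_left m₀ 0).trans ((dispersion_nonneg_iff hβ.le (le_max_right _ _) k).1 ?_)
  have hk1 : 1 ≤ |k| := le_trans (le_add_of_nonneg_left (by positivity)) hk
  have hβk : m ^ 2 + |C| + β ≤ β * |k| := by
    rw [div_add_one hβ.ne', div_le_iff₀ hβ] at hk
    linarith
  have hf := mul_le_mul_of_nonneg_left (fdisp_le_one_add_abs k) (sq_nonneg m)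
  have h1 := mul_nonneg (abs_nonneg k) (sub_nonneg.2 hβk)
  have h2 := mul_nonneg (sub_nonneg.2 hk1) (add_nonneg (abs_nonneg C) hβ.le)
  unfold dispersion
  nlinarith [sq_abs k, neg_abs_le C]

lemma hasDerivAt_dispersion (ω β m : ℝ) {x : ℝ} (hx : x ≠ 0) :
    HasDerivAt (dispersion ω β m) (2 * β * x - m ^ 2 * fdispDeriv x) x :=
  (((((hasDerivAt_pow 2 x).const_mul β).const_add 1).sub_const (ω * m)).fun_sub
    ((hasDerivAt_fdisp hx).const_mul (m ^ 2))).congr_deriv (by norm_num; ring)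

lemma strictConvexOn_dispersion_deriv (β : ℝ) {m : ℝ} (hm : m ≠ 0) :
    StrictConvexOn ℝ (Ioi 0) fun x => 2 * β * x - m ^ 2 * fdispDeriv x := by
  have hderiv {x : ℝ} (hx : 0 < x) : HasDerivAt (fun x => 2 * β * x - m ^ 2 * fdispDeriv x)
      (2 * β - m ^ 2 * fdispDeriv2 x) x := by
    simpa using ((hasDerivAt_id x).const_mul (2 * β)).fun_sub
      ((hasDerivAt_fdispDeriv hx.ne').const_mul (m ^ 2))
  refine StrictMonoOn.strictConvexOn_of_deriv (convex_Ioi 0)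
    (fun x hx => (hderiv hx).continuousAt.continuousWithinAt) ?_
  rw [interior_Ioi]
  intro x hx y hy hxy
  rw [(hderiv hx).deriv, (hderiv hy).deriv]
  nlinarith [strictAntiOn_fdispDeriv2 hx hy hxy, sq_pos_of_ne_zero hm]

lemma eq_of_dispersion_eq_zero {ω β m a b : ℝ} (hm : m ≠ 0)
    (hnonneg : ∀ k, 0 ≤ dispersion ω β m k) (ha : 0 < a) (hb : 0 < b)
    (ha0 : dispersion ω β m a = 0) (hb0 : dispersion ω β m b = 0) : a = b :=
  eq_of_isLocalMin_of_strictConvexOn_deriv (convex_Ioi 0)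
    (fun _ hx => hasDerivAt_dispersion ω β m (ne_of_gt hx))
    (strictConvexOn_dispersion_deriv β hm)
    ha hb (.of_forall fun k => ha0 ▸ hnonneg k) (.of_forall fun k => hb0 ▸ hnonneg k)
    (ha0.trans hb0.symm)

theorem stmt10 (ω β βc : ℝ)
    (hβc : βc = (ω ^ 2 + 2 - ω * Real.sqrt (ω ^ 2 + 4)) / 6)
    (hβpos : 0 < β) (hβ : β < βc)
    (ν : ℝ → ℝ)
    (hν : ∀ k : ℝ, ν k = -ω / (2 * fdisp k) +
      (1 / 2) * Real.sqrt (ω ^ 2 / (fdisp k) ^ 2 + 4 * (1 + β * k ^ 2) / fdisp k)) :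
    ∃ k₀ : ℝ, 0 < k₀ ∧
      (∀ k : ℝ, 0 ≤ k → ν k₀ ≤ ν k) ∧
      (∀ k : ℝ, 0 ≤ k → (∀ k' : ℝ, 0 ≤ k' → ν k ≤ ν k') → k = k₀) ∧
      ν k₀ < ν 0 ∧
      (∀ k : ℝ, 0 ≤ 1 + β * k ^ 2 - ω * ν k₀ - (ν k₀) ^ 2 * fdisp k) ∧
      (∀ k : ℝ, 1 + β * k ^ 2 - ω * ν k₀ - (ν k₀) ^ 2 * fdisp k = 0 ↔
        k = k₀ ∨ k = -k₀) := by
  obtain rfl : ν = dispersionRoot ω β := funext hν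
  have h3β : 3 * β < dispersionRoot ω β 0 ^ 2 := by
    rw [dispersionRoot_zero_sq]
    linarith
  obtain ⟨k₁, hk₁, hk₁_lt⟩ := exists_dispersionRoot_lt_dispersionRoot_zero hβpos h3β
  obtain ⟨x, hx⟩ := continuous_dispersionRoot.exists_forall_le' 0
    ((tendsto_dispersionRoot_cocompact hβpos).eventually_ge_atTop _)
  set k₀ := |x|
  set m := dispersionRoot ω β k₀
  have hm : 0 < m := dispersionRoot_pos hβpos.le k₀
  have hmin (k : ℝ) : m ≤ dispersionRoot ω β k := (dispersionRoot_abs x).trans_le (hx k)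
  have hlt : m < dispersionRoot ω β 0 := (hmin k₁).trans_lt hk₁_lt
  have hk₀ : 0 < k₀ := (abs_nonneg x).lt_of_ne fun h => hlt.ne (by rw [h])
  have hnonneg (k : ℝ) : 0 ≤ dispersion ω β m k :=
    (dispersion_nonneg_iff hβpos.le hm.le k).2 (hmin k)
  have hzero (k : ℝ) : dispersion ω β m k = 0 ↔ |k| = k₀ := by
    rw [← dispersion_abs]
    refine ⟨fun h => eq_of_dispersion_eq_zero hm.ne' hnonneg ?_ hk₀ h
      ((dispersion_eq_zero_iff hβpos.le hm.le k₀).2 rfl), fun h => ?_⟩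
    · refine (abs_nonneg k).lt_of_ne fun h0 => hlt.ne' ?_
      rwa [← h0, dispersion_eq_zero_iff hβpos.le hm.le] at h
    · rw [h]
      exact (dispersion_eq_zero_iff hβpos.le hm.le k₀).2 rfl
  refine ⟨k₀, hk₀, fun k _ => hmin k, fun k hk hk_min => ?_, hlt, hnonneg,
    fun k => (hzero k).trans (abs_eq hk₀.le)⟩
  have : dispersion ω β m k = 0 :=
    (dispersion_eq_zero_iff hβpos.le hm.le k).2 (le_antisymm (hk_min k₀ hk₀.le) (hmin k))
  simpa [abs_of_nonneg hk] using (hzero k).1 this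
end

section
/- Suppose that g(k) := 1 + βk² − ων₀ − ν₀²·f(k) ≥ 0 for all k ∈ ℝ. Let u : ℝ → ℂ be a measurable function, not almost everywhere zero, such that K₂(u) := (1/2)∫(1 + βk²)|u(k)|² dk is finite, and set G₂(u) := −(ω/4)∫|u(k)|² dk and L₂(u) := (1/2)∫ f(k)|u(k)|² dk (which is then finite and positive). Then for every μ > 0, K₂(u) + (μ + G₂(u))²/L₂(u) ≥ 2ν₀μ. -/
open MeasureTheory

lemma sinh_le_mul_cosh {x : ℝ} (hx : 0 ≤ x) : Real.sinh x ≤ x * Real.cosh x := by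
  have hmono : MonotoneOn (fun x => x * Real.cosh x - Real.sinh x) (Set.Ici (0:ℝ)) := by
    apply monotoneOn_of_deriv_nonneg (convex_Ici 0)
    · exact (Continuous.sub (continuous_id.mul Real.continuous_cosh)
        Real.continuous_sinh).continuousOn
    · intro y _
      exact (((hasDerivAt_id y).mul (Real.hasDerivAt_cosh y)).sub
        (Real.hasDerivAt_sinh y)).differentiableAt.differentiableWithinAt
    · intro y hy
      simp only [interior_Ici, Set.mem_Ioi] at hy
      have hd : HasDerivAt (fun x => x * Real.cosh x - Real.sinh x)
          ((1 * Real.cosh y + y * Real.sinh y) - Real.cosh y) y :=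
        ((hasDerivAt_id y).mul (Real.hasDerivAt_cosh y)).sub (Real.hasDerivAt_sinh y)
      rw [hd.deriv]
      have : 0 ≤ y * Real.sinh y := mul_nonneg hy.le (Real.sinh_nonneg_iff.2 hy.le)
      linarith
  have := hmono (Set.self_mem_Ici) (Set.mem_Ici.2 hx) hx
  simp at this
  linarith

lemma one_le_fdisp (k : ℝ) : 1 ≤ fdisp k := by
  unfold fdisp
  rcases eq_or_ne k 0 with h | h
  · simp [h]
  rw [if_neg h]
  rcases lt_or_gt_of_ne h with hk | hk
  · have hs : Real.sinh k < 0 := Real.sinh_neg_iff.2 hk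
    rw [le_div_iff_of_neg hs]
    have := sinh_le_mul_cosh (x := -k) (by linarith)
    simp only [Real.sinh_neg, Real.cosh_neg] at this
    linarith
  · have hs : 0 < Real.sinh k := Real.sinh_pos_iff.2 hk
    rw [le_div_iff₀ hs]
    simpa using sinh_le_mul_cosh hk.le

lemma measurable_fdisp : Measurable fdisp := by
  unfold fdisp
  exact Measurable.ite (measurableSet_eq_fun measurable_id measurable_const)
    measurable_const
    ((measurable_id.mul Real.continuous_cosh.measurable).div
      Real.continuous_sinh.measurable)

theorem stmt13 (ω β ν₀ : ℝ) (hβ : 0 < β)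
    (hν₀ : ν₀ = (-ω + Real.sqrt (ω ^ 2 + 4)) / 2)
    (hg : ∀ k : ℝ, 0 ≤ 1 + β * k ^ 2 - ω * ν₀ - ν₀ ^ 2 * fdisp k)
    (u : ℝ → ℂ) (hu : Measurable u)
    (hne : ¬ (∀ᵐ k : ℝ, u k = 0))
    (hK2 : Integrable (fun k : ℝ => (1 + β * k ^ 2) * ‖u k‖ ^ 2)) :
    Integrable (fun k : ℝ => fdisp k * ‖u k‖ ^ 2) ∧
    0 < (1 / 2) * ∫ k : ℝ, fdisp k * ‖u k‖ ^ 2 ∧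
    ∀ μ : ℝ, 0 < μ →
      2 * ν₀ * μ ≤ (1 / 2) * (∫ k : ℝ, (1 + β * k ^ 2) * ‖u k‖ ^ 2) +
        (μ + -(ω / 4) * ∫ k : ℝ, ‖u k‖ ^ 2) ^ 2 /
          ((1 / 2) * ∫ k : ℝ, fdisp k * ‖u k‖ ^ 2) := by
  -- basic facts about ν₀
  have hs : Real.sqrt (ω ^ 2 + 4) ^ 2 = ω ^ 2 + 4 :=
    Real.sq_sqrt (by positivity)
  have hν₀pos : 0 < ν₀ := by
    rw [hν₀]
    have h1 : ω < Real.sqrt (ω ^ 2 + 4) := by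
      nlinarith [Real.sqrt_nonneg (ω ^ 2 + 4)]
    linarith
  have hroot : ν₀ ^ 2 + ω * ν₀ = 1 := by
    rw [hν₀]; nlinarith [hs]
  -- measurability
  have hmu2 : Measurable (fun k : ℝ => ‖u k‖ ^ 2) := (hu.norm.pow_const 2)
  have hnn : ∀ k : ℝ, (0:ℝ) ≤ ‖u k‖ ^ 2 := fun k => by positivity
  -- integrability of ‖u‖²
  have hIu2 : Integrable (fun k : ℝ => ‖u k‖ ^ 2) := by
    refine hK2.mono hmu2.aestronglyMeasurable (Filter.Eventually.of_forall fun k => ?_)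
    have h1 : (1:ℝ) ≤ 1 + β * k ^ 2 := by nlinarith
    rw [Real.norm_eq_abs, Real.norm_eq_abs, abs_of_nonneg (hnn k),
      abs_of_nonneg (by nlinarith [hnn k])]
    nlinarith [hnn k]
  -- integrability of fdisp * ‖u‖²
  have hfub : ∀ k : ℝ, fdisp k ≤ ((1 + |ω| * ν₀) / ν₀ ^ 2) * (1 + β * k ^ 2) := by
    intro k
    have h := hg k
    have h1 : (1:ℝ) ≤ 1 + β * k ^ 2 := by nlinarith
    have h2 : ν₀ ^ 2 * fdisp k ≤ 1 + β * k ^ 2 + |ω| * ν₀ := by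
      nlinarith [neg_abs_le ω, hν₀pos]
    rw [div_mul_eq_mul_div, le_div_iff₀ (by positivity)]
    nlinarith [mul_le_mul_of_nonneg_left h1 (mul_nonneg (abs_nonneg ω) hν₀pos.le)]
  have hIL : Integrable (fun k : ℝ => fdisp k * ‖u k‖ ^ 2) := by
    refine (hK2.const_mul ((1 + |ω| * ν₀) / ν₀ ^ 2)).mono
      ((measurable_fdisp.mul hmu2).aestronglyMeasurable)
      (Filter.Eventually.of_forall fun k => ?_)
    have hC : (0:ℝ) ≤ (1 + |ω| * ν₀) / ν₀ ^ 2 := by positivity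
    have h1 : (0:ℝ) ≤ fdisp k := le_trans zero_le_one (one_le_fdisp k)
    have h2 : (0:ℝ) ≤ 1 + β * k ^ 2 := by nlinarith
    rw [Real.norm_eq_abs, Real.norm_eq_abs, abs_of_nonneg (mul_nonneg h1 (hnn k)),
      abs_of_nonneg (mul_nonneg hC (mul_nonneg h2 (hnn k)))]
    calc fdisp k * ‖u k‖ ^ 2
        ≤ ((1 + |ω| * ν₀) / ν₀ ^ 2) * (1 + β * k ^ 2) * ‖u k‖ ^ 2 :=
          mul_le_mul_of_nonneg_right (hfub k) (hnn k)
      _ = ((1 + |ω| * ν₀) / ν₀ ^ 2) * ((1 + β * k ^ 2) * ‖u k‖ ^ 2) := by ring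
  -- positivity of ∫‖u‖²
  have hu2pos : 0 < ∫ k : ℝ, ‖u k‖ ^ 2 := by
    rw [integral_pos_iff_support_of_nonneg hnn hIu2]
    rw [Filter.eventually_iff, mem_ae_iff] at hne
    have hsupp : Function.support (fun k : ℝ => ‖u k‖ ^ 2) = {k : ℝ | u k = 0}ᶜ := by
      ext k
      simp [Function.mem_support, pow_eq_zero_iff, norm_eq_zero]
    rw [hsupp]
    exact pos_iff_ne_zero.2 hne
  -- positivity of L₂
  have hLpos : 0 < (1 / 2) * ∫ k : ℝ, fdisp k * ‖u k‖ ^ 2 := by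
    have hmono : ∫ k : ℝ, ‖u k‖ ^ 2 ≤ ∫ k : ℝ, fdisp k * ‖u k‖ ^ 2 := by
      refine integral_mono hIu2 hIL fun k => ?_
      nlinarith [one_le_fdisp k, hnn k]
    linarith
  refine ⟨hIL, hLpos, fun μ hμ => ?_⟩
  -- integral identity
  have hIg : Integrable (fun k : ℝ => (1 + β * k ^ 2 - ω * ν₀ - ν₀ ^ 2 * fdisp k) * ‖u k‖ ^ 2) := by
    have := (hK2.sub (hIu2.const_mul (ω * ν₀))).sub (hIL.const_mul (ν₀ ^ 2))
    refine this.congr (Filter.Eventually.of_forall fun k => ?_)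
    simp only [Pi.sub_apply]
    ring
  have hIgnn : 0 ≤ ∫ k : ℝ, (1 + β * k ^ 2 - ω * ν₀ - ν₀ ^ 2 * fdisp k) * ‖u k‖ ^ 2 :=
    integral_nonneg fun k => mul_nonneg (hg k) (hnn k)
  have hsplit : ∫ k : ℝ, (1 + β * k ^ 2) * ‖u k‖ ^ 2
      = (∫ k : ℝ, (1 + β * k ^ 2 - ω * ν₀ - ν₀ ^ 2 * fdisp k) * ‖u k‖ ^ 2)
        + (ω * ν₀) * (∫ k : ℝ, ‖u k‖ ^ 2) + ν₀ ^ 2 * (∫ k : ℝ, fdisp k * ‖u k‖ ^ 2) := by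
    have heq : (fun k : ℝ => (1 + β * k ^ 2) * ‖u k‖ ^ 2)
        = (fun k : ℝ => ((1 + β * k ^ 2 - ω * ν₀ - ν₀ ^ 2 * fdisp k) * ‖u k‖ ^ 2
            + (ω * ν₀) * ‖u k‖ ^ 2) + ν₀ ^ 2 * (fdisp k * ‖u k‖ ^ 2)) := by
      funext k; ring
    have h1 : Integrable (fun k : ℝ => (1 + β * k ^ 2 - ω * ν₀ - ν₀ ^ 2 * fdisp k) * ‖u k‖ ^ 2
        + (ω * ν₀) * ‖u k‖ ^ 2) := hIg.add (hIu2.const_mul (ω * ν₀))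
    have h2 : Integrable (fun k : ℝ => ν₀ ^ 2 * (fdisp k * ‖u k‖ ^ 2)) := hIL.const_mul (ν₀ ^ 2)
    have h3 : Integrable (fun k : ℝ => (ω * ν₀) * ‖u k‖ ^ 2) := hIu2.const_mul (ω * ν₀)
    rw [heq, integral_add h1 h2, integral_add hIg h3, integral_const_mul, integral_const_mul]
  set Ig := ∫ k : ℝ, (1 + β * k ^ 2 - ω * ν₀ - ν₀ ^ 2 * fdisp k) * ‖u k‖ ^ 2 with hIgdef
  set B := ∫ k : ℝ, ‖u k‖ ^ 2 with hB
  set L := (1 / 2) * ∫ k : ℝ, fdisp k * ‖u k‖ ^ 2 with hL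
  have hA : (1 / 2) * (∫ k : ℝ, (1 + β * k ^ 2) * ‖u k‖ ^ 2)
      = Ig / 2 + (ω * ν₀) * B / 2 + ν₀ ^ 2 * L := by
    rw [hsplit, hL]; ring
  rw [hA]
  have hkey : (μ + -(ω / 4) * B) ^ 2 / L
      = (μ + -(ω / 4) * B - ν₀ * L) ^ 2 / L + 2 * ν₀ * (μ + -(ω / 4) * B) - ν₀ ^ 2 * L := by
    field_simp
    ring
  rw [hkey]
  have hsq : 0 ≤ (μ + -(ω / 4) * B - ν₀ * L) ^ 2 / L := by positivity
  nlinarith [hν₀pos, hμ]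
end
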